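/- arXiv:1410.5755 — 5 statements merged into one kernel-verified Lean document; each statement's English description precedes it below -/
import Mathlib

section
/- Let G be a finite abelian group with dual group Ĝ, let F̃ : G → M_d(ℂ) be a family of matrices, and define the Fourier-transformed family F : Ĝ → M_d(ℂ) by F(χ) = (1/|G|) Σ_{g∈G} χ(g) F̃(g). Let ρ ∈ M_d(ℂ) and define the characteristic function φ_ρ : G → ℂ by φ_ρ(g) = Tr(ρ F̃(g)). Then the quasi-probability representation μ_ρ : Ĝ → ℂ, μ_ρ(χ) = Tr(ρ F(χ)), satisfies μ_ρ(χ) ≥ 0 for all χ ∈ Ĝ and Σ_{χ∈Ĝ} μ_ρ(χ) = 1 if and only if φ_ρ(e) = 1 and φ_ρ is positive definite on G, i.e., for every a : G → ℂ, Σ_{g,g'∈G} conj(a(g)) a(g') φ_ρ(g' g⁻¹) ≥ 0. -/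
open Finset ComplexConjugate
open scoped ComplexOrder

/-!
Writing `μ` as the Fourier transform `μ(χ) = |G|⁻¹ ∑_g χ(g) φ(g)` of `φ`, Fourier inversion
`φ(h) = ∑_χ χ(h⁻¹) μ(χ)` gives `∑_χ μ(χ) = φ(1)` and turns the Hermitian form of `φ` into
`∑_χ μ(χ) |∑_g conj(a(g)) χ(g)|²`, which is nonnegative when `μ ≥ 0`. Conversely, testing
positive definiteness on `a = χ` gives `|G|² μ(χ) ≥ 0`.
-/

theorem MonoidHom.sum_units_apply_eq_ite {G K : Type*} [CommGroup G] [Fintype G] [CommRing K]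
    [IsDomain K] [HasEnoughRootsOfUnity K (Monoid.exponent G)] [Fintype (G →* Kˣ)]
    [DecidableEq G] (g : G) :
    ∑ χ : G →* Kˣ, (χ g : K) = if g = 1 then (Fintype.card G : K) else 0 := by
  classical
  have hcard : Fintype.card (G →* Kˣ) = Fintype.card G := by
    simpa only [Nat.card_eq_fintype_card] using
      CommGroup.card_monoidHom_of_hasEnoughRootsOfUnity G K
  have heval : (Units.coeHom K).comp (MonoidHom.eval g) = 1 ↔ g = 1 := by
    simpa [MonoidHom.ext_iff, Units.val_eq_one] using
      CommGroup.forall_apply_eq_apply_iff G (M := K) (g := g) (g' := 1)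
  simpa [heval, hcard, apply_ite] using sum_hom_units ((Units.coeHom K).comp (MonoidHom.eval g))

theorem MonoidHom.conj_units_apply {G : Type*} [Group G] [Finite G] (χ : G →* ℂˣ) (g : G) :
    conj (χ g : ℂ) = χ g⁻¹ := by
  have hpow : (χ g : ℂ) ^ Nat.card G = 1 := by
    rw [← Units.val_pow_eq_pow_val, ← map_pow, pow_card_eq_one', map_one, Units.val_one]
  have hnorm : ‖(χ g : ℂ)‖ = 1 := Complex.norm_eq_one_of_pow_eq_one hpow Nat.card_pos.ne'
  rw [map_inv, Units.val_inv_eq_inv_val, Complex.inv_eq_conj hnorm]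

section FiniteBochner

variable {G : Type*} [CommGroup G] [Fintype G]

def IsPositiveDefinite (φ : G → ℂ) : Prop :=
  ∀ a : G → ℂ, 0 ≤ ∑ g, ∑ g', conj (a g) * a g' * φ (g' * g⁻¹)

noncomputable def dualTransform (φ : G → ℂ) (χ : G →* ℂˣ) : ℂ :=
  (Fintype.card G : ℂ)⁻¹ * ∑ g, (χ g : ℂ) * φ g

theorem sum_sum_conj_apply_mul_apply_mul_eq (φ : G → ℂ) (χ : G →* ℂˣ) :
    ∑ g, ∑ g', conj (χ g : ℂ) * χ g' * φ (g' * g⁻¹) =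
      (Fintype.card G : ℂ) ^ 2 * dualTransform φ χ := by
  have hN : (Fintype.card G : ℂ) ≠ 0 := Nat.cast_ne_zero.mpr Fintype.card_ne_zero
  have hrow (g : G) : ∑ g', conj (χ g : ℂ) * χ g' * φ (g' * g⁻¹) = ∑ x, (χ x : ℂ) * φ x := by
    rw [← Equiv.sum_comp (Equiv.mulRight g) (fun g' ↦ conj (χ g : ℂ) * χ g' * φ (g' * g⁻¹))]
    simp only [Equiv.coe_mulRight, mul_inv_cancel_right, MonoidHom.conj_units_apply,
      ← Units.val_mul, ← map_mul, inv_mul_cancel_comm_assoc]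
  simp only [hrow, sum_const, card_univ, nsmul_eq_mul, dualTransform]
  field_simp

variable [Fintype (G →* ℂˣ)]

theorem sum_apply_inv_mul_dualTransform (φ : G → ℂ) (h : G) :
    ∑ χ : G →* ℂˣ, (χ h⁻¹ : ℂ) * dualTransform φ χ = φ h := by
  classical
  have hN : (Fintype.card G : ℂ) ≠ 0 := Nat.cast_ne_zero.mpr Fintype.card_ne_zero
  have hshift (χ : G →* ℂˣ) :
      (χ h⁻¹ : ℂ) * ∑ g, (χ g : ℂ) * φ g = ∑ g, (χ g : ℂ) * φ (g * h) := by
    rw [mul_sum, ← Equiv.sum_comp (Equiv.mulRight h) (fun g ↦ (χ h⁻¹ : ℂ) * ((χ g : ℂ) * φ g))]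
    simp only [Equiv.coe_mulRight, ← mul_assoc, ← Units.val_mul, ← map_mul, inv_mul_cancel_comm]
  calc ∑ χ : G →* ℂˣ, (χ h⁻¹ : ℂ) * dualTransform φ χ
      = (Fintype.card G : ℂ)⁻¹ * ∑ g, (∑ χ : G →* ℂˣ, (χ g : ℂ)) * φ (g * h) := by
        simp only [dualTransform, mul_left_comm _ (Fintype.card G : ℂ)⁻¹, hshift, ← mul_sum,
          sum_mul]
        rw [sum_comm]
    _ = φ h := by simp [MonoidHom.sum_units_apply_eq_ite, hN]

theorem sum_dualTransform (φ : G → ℂ) : ∑ χ : G →* ℂˣ, dualTransform φ χ = φ 1 := by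
  simpa using sum_apply_inv_mul_dualTransform φ 1

theorem sum_sum_conj_mul_mul_eq_sum_dualTransform_mul_normSq (φ a : G → ℂ) :
    ∑ g, ∑ g', conj (a g) * a g' * φ (g' * g⁻¹) =
      ∑ χ : G →* ℂˣ, dualTransform φ χ * Complex.normSq (∑ g, conj (a g) * χ g) := by
  have hφ (g g' : G) : φ (g' * g⁻¹) =
      ∑ χ : G →* ℂˣ, (χ g : ℂ) * conj (χ g' : ℂ) * dualTransform φ χ := by
    rw [← sum_apply_inv_mul_dualTransform φ]
    refine sum_congr rfl fun χ _ ↦ ?_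
    rw [MonoidHom.conj_units_apply, ← Units.val_mul, ← map_mul, mul_inv_rev, inv_inv]
  simp_rw [← Complex.mul_conj, map_sum, map_mul, Complex.conj_conj, sum_mul_sum, mul_sum, hφ,
    mul_sum]
  refine (sum_congr rfl fun g _ ↦ sum_comm).trans <| sum_comm.trans <|
    sum_congr rfl fun χ _ ↦ sum_congr rfl fun g _ ↦ sum_congr rfl fun g' _ ↦ by ring

theorem isPositiveDefinite_iff_forall_dualTransform_nonneg (φ : G → ℂ) :
    IsPositiveDefinite φ ↔ ∀ χ : G →* ℂˣ, 0 ≤ dualTransform φ χ := by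
  refine ⟨fun hφ χ ↦ ?_, fun hμ a ↦ ?_⟩
  · have hN : (Fintype.card G : ℂ) ≠ 0 := Nat.cast_ne_zero.mpr Fintype.card_ne_zero
    have hχ := hφ (fun g ↦ χ g)
    rw [sum_sum_conj_apply_mul_apply_mul_eq] at hχ
    have hinv : (0 : ℂ) ≤ ((Fintype.card G : ℂ) ^ 2)⁻¹ := by positivity
    simpa [hN] using mul_nonneg hinv hχ
  · rw [sum_sum_conj_mul_mul_eq_sum_dualTransform_mul_normSq]
    exact sum_nonneg fun χ _ ↦
      mul_nonneg (hμ χ) (Complex.zero_le_real.mpr (Complex.normSq_nonneg _))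

end FiniteBochner

/-- **Quantum Bochner's theorem, classical positivity part.**
Given a family `F̃ : G → M_d(ℂ)` over a finite abelian group `G`, its Fourier transform
`F(χ) = (1/|G|) ∑_g χ(g) F̃(g)` over the dual group `Ĝ = G →* ℂˣ`, an operator `ρ` with
characteristic function `φ_ρ(g) = Tr(ρ F̃(g))` and quasi-probability representation
`μ_ρ(χ) = Tr(ρ F(χ))`: the representation `μ_ρ` is nonnegative and normalized if and only if
`φ_ρ(e) = 1` and `φ_ρ` is positive definite on `G`. -/
theorem quasiProb_nonneg_iff_charFun_posDef {G : Type*} [CommGroup G] [Fintype G]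
    [Fintype (G →* ℂˣ)] {d : ℕ}
    (Ftil : G → Matrix (Fin d) (Fin d) ℂ) (ρ : Matrix (Fin d) (Fin d) ℂ)
    (F : (G →* ℂˣ) → Matrix (Fin d) (Fin d) ℂ)
    (hF : ∀ χ : G →* ℂˣ,
      F χ = (1 / (Fintype.card G : ℂ)) • ∑ g, (χ g : ℂ) • Ftil g)
    (φ : G → ℂ) (hφ : ∀ g, φ g = (ρ * Ftil g).trace)
    (μ : (G →* ℂˣ) → ℂ) (hμ : ∀ χ, μ χ = (ρ * F χ).trace) :
    ((∀ χ, 0 ≤ μ χ) ∧ ∑ χ : G →* ℂˣ, μ χ = 1) ↔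
      (φ 1 = 1 ∧
        ∀ a : G → ℂ, 0 ≤ ∑ g : G, ∑ g' : G, conj (a g) * a g' * φ (g' * g⁻¹)) := by
  have hμφ : μ = dualTransform φ := funext fun χ ↦ by
    simp only [hμ, hF, hφ, dualTransform, Matrix.mul_smul, Matrix.trace_smul,
      Matrix.trace_sum, smul_eq_mul, one_div, mul_sum]
  subst hμφ
  rw [sum_dualTransform, ← isPositiveDefinite_iff_forall_dualTransform_nonneg, and_comm]
  rfl
end

section
/- Let G be a finite abelian group and let Π : G → M_d(ℂ) be a projective frame: each Π(g) is unitary, Π(e) = 1, Π(g)Π(g') = α(g,g')Π(gg') for a 2-cocycle α : G×G → ℂ, Π(g⁻¹) = Π(g)⁻¹ for all g, and the set {Π(g) : g ∈ G} spans M_d(ℂ) as a complex vector space. Let ρ ∈ M_d(ℂ) be Hermitian, with characteristic function φ_ρ(g) = Tr(ρ Π(g)). Then ρ is positive semidefinite if and only if the G×G matrix M^Q with entries M^Q_{g,g'} = φ_ρ(g' g⁻¹) α(g⁻¹, g') is positive semidefinite. -/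
open Finset Matrix ComplexConjugate
open scoped ComplexOrder

/-!
Since `P g⁻¹ = (P g)ᴴ`, the cocycle relation turns `M^Q` into the Gram matrix `Tr(ρ (P g)ᴴ P g')`
of the frame for the form `(A, B) ↦ Tr(ρ Aᴴ B)`; its quadratic form at `c` is `Tr(ρ Aᴴ A)` with
`A = ∑ c g • P g`. As the frame spans `M_d(ℂ)`, positivity of `M^Q` says `Tr(ρ Aᴴ A) ≥ 0` for every
`A`, which is positivity of `ρ`: for `A = e_i x*` one gets `Tr(ρ Aᴴ A) = x* ρ x`.
-/

namespace Matrix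

variable {n ι 𝕜 : Type*} [Fintype n] [Fintype ι] [RCLike 𝕜]

lemma PosSemidef.trace_mul_conjTranspose_mul_nonneg {ρ : Matrix n n 𝕜} (hρ : ρ.PosSemidef)
    (A : Matrix n n 𝕜) : 0 ≤ (ρ * Aᴴ * A).trace := by
  rw [trace_mul_cycle]
  exact (hρ.mul_mul_conjTranspose_same A).trace_nonneg

lemma trace_mul_conjTranspose_mul_vecMulVec_single [DecidableEq n] (ρ : Matrix n n 𝕜)
    (i : n) (x : n → 𝕜) :
    (ρ * (vecMulVec (Pi.single i 1) (star x))ᴴ * vecMulVec (Pi.single i 1) (star x)).trace =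
      star x ⬝ᵥ ρ *ᵥ x := by
  rw [conjTranspose_vecMulVec, Matrix.mul_assoc, vecMulVec_mul_vecMulVec, star_star,
    mul_vecMulVec, trace_vecMulVec, dotProduct_comm]
  simp

lemma IsHermitian.posSemidef_iff_trace_mul_conjTranspose_mul_nonneg {ρ : Matrix n n 𝕜}
    (hρ : ρ.IsHermitian) : ρ.PosSemidef ↔ ∀ A : Matrix n n 𝕜, 0 ≤ (ρ * Aᴴ * A).trace := by
  classical
  refine ⟨PosSemidef.trace_mul_conjTranspose_mul_nonneg,
    fun h => .of_dotProduct_mulVec_nonneg hρ fun x => ?_⟩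
  cases isEmpty_or_nonempty n
  · simp [dotProduct]
  · rw [← trace_mul_conjTranspose_mul_vecMulVec_single ρ (Classical.arbitrary n)]
    exact h _

lemma dotProduct_mulVec_trace_mul_conjTranspose_mul (ρ : Matrix n n 𝕜) (P : ι → Matrix n n 𝕜)
    (c : ι → 𝕜) :
    star c ⬝ᵥ (of fun i j => (ρ * (P i)ᴴ * P j).trace) *ᵥ c =
      (ρ * (∑ i, c i • P i)ᴴ * ∑ i, c i • P i).trace := by
  simp only [conjTranspose_sum, conjTranspose_smul, Finset.mul_sum, Finset.sum_mul,
    Matrix.mul_smul, Matrix.smul_mul, trace_sum, trace_smul, smul_eq_mul, dotProduct, mulVec,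
    of_apply, Pi.star_apply]
  rw [Finset.sum_comm]
  refine Finset.sum_congr rfl fun i _ => Finset.sum_congr rfl fun j _ => ?_
  ring

lemma IsHermitian.posSemidef_iff_posSemidef_of_span_eq_top {ρ : Matrix n n 𝕜}
    (hρ : ρ.IsHermitian) {P : ι → Matrix n n 𝕜} (hspan : Submodule.span 𝕜 (Set.range P) = ⊤) :
    ρ.PosSemidef ↔ (of fun i j => (ρ * (P i)ᴴ * P j).trace).PosSemidef := by
  have hherm : (of fun i j => (ρ * (P i)ᴴ * P j).trace).IsHermitian := by
    ext i j
    rw [conjTranspose_apply, of_apply, of_apply, ← trace_conjTranspose, conjTranspose_mul,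
      conjTranspose_mul, conjTranspose_conjTranspose, hρ.eq,
      ← Matrix.mul_assoc, trace_mul_cycle]
  rw [hρ.posSemidef_iff_trace_mul_conjTranspose_mul_nonneg, posSemidef_iff_dotProduct_mulVec]
  simp only [hherm, true_and, dotProduct_mulVec_trace_mul_conjTranspose_mul]
  refine ⟨fun h c => h _, fun h A => ?_⟩
  obtain ⟨c, rfl⟩ :=
    (Submodule.mem_span_range_iff_exists_fun 𝕜).mp (hspan ▸ Submodule.mem_top (x := A))
  exact h c

end Matrix

theorem posSemidef_iff_alpha_posDef_general {G : Type*} [CommGroup G] [Fintype G] {d : ℕ}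
    (P : G → Matrix (Fin d) (Fin d) ℂ) (α : G → G → ℂ)
    (hunit : ∀ g, (P g)ᴴ * P g = 1)
    (hcoc : ∀ g g', P g * P g' = α g g' • P (g * g'))
    (hinv : ∀ g, P g⁻¹ * P g = 1)
    (hspan : Submodule.span ℂ (Set.range P) = ⊤)
    (ρ : Matrix (Fin d) (Fin d) ℂ) (hρ : ρ.IsHermitian)
    (φ : G → ℂ) (hφ : ∀ g, φ g = (ρ * P g).trace) :
    ρ.PosSemidef ↔
      (Matrix.of fun g g' : G => φ (g' * g⁻¹) * α g⁻¹ g').PosSemidef := by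
  have hadj (g : G) : (P g)ᴴ = P g⁻¹ := by
    rw [← inv_eq_left_inv (hunit g), inv_eq_left_inv (hinv g)]
  have hentry (g g' : G) : φ (g' * g⁻¹) * α g⁻¹ g' = (ρ * (P g)ᴴ * P g').trace := by
    rw [hφ, Matrix.mul_assoc, hadj, hcoc, mul_comm g', Matrix.mul_smul, trace_smul, smul_eq_mul,
      mul_comm]
  simp only [hentry]
  exact hρ.posSemidef_iff_posSemidef_of_span_eq_top hspan

/-- **Quantum Bochner's theorem, quantum positivity part.**
Let `P : G → M_d(ℂ)` be a projective frame over a finite abelian group `G`: unitary values,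
`P(e) = 1`, cocycle relation `P(g)P(g') = α(g,g') P(gg')`, `P(g⁻¹) = P(g)⁻¹`, and with image
spanning `M_d(ℂ)`. A Hermitian `ρ` with characteristic function `φ_ρ(g) = Tr(ρ P(g))` is
positive semidefinite iff the matrix `M^Q_{g,g'} = φ_ρ(g' g⁻¹) α(g⁻¹, g')` is
positive semidefinite. -/
theorem posSemidef_iff_alpha_posDef {G : Type*} [CommGroup G] [Fintype G] {d : ℕ}
    (P : G → Matrix (Fin d) (Fin d) ℂ) (α : G → G → ℂ)
    (hunit : ∀ g, (P g)ᴴ * P g = 1)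
    (hone : P 1 = 1)
    (hcoc : ∀ g g', P g * P g' = α g g' • P (g * g'))
    (hinv : ∀ g, P g⁻¹ * P g = 1)
    (hspan : Submodule.span ℂ (Set.range P) = ⊤)
    (ρ : Matrix (Fin d) (Fin d) ℂ) (hρ : ρ.IsHermitian)
    (φ : G → ℂ) (hφ : ∀ g, φ g = (ρ * P g).trace) :
    ρ.PosSemidef ↔
      (Matrix.of fun g g' : G => φ (g' * g⁻¹) * α g⁻¹ g').PosSemidef :=
  posSemidef_iff_alpha_posDef_general P α hunit hcoc hinv hspan ρ hρ φ hφ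
end

section
/- Let G be a finite abelian group with dual group Ĝ, and let Π : G → M_d(ℂ) be a projective frame with 2-cocycle α. Define F(χ) = (1/|G|) Σ_{g∈G} χ(g) Π(g) for χ ∈ Ĝ. Let ρ ∈ M_d(ℂ) be Hermitian with φ_ρ(g) = Tr(ρ Π(g)) and φ_ρ(e) = 1. Then ρ is a density matrix (positive semidefinite with trace normalization encoded by φ_ρ(e) = 1) whose quasi-probability representation μ_ρ(χ) = Tr(ρ F(χ)) is nonnegative for every χ ∈ Ĝ, if and only if both of the following G×G matrices are positive semidefinite: M^Q with entries M^Q_{g,g'} = φ_ρ(g' g⁻¹) α(g⁻¹, g'), and M^C with entries M^C_{g,g'} = φ_ρ(g' g⁻¹). -/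
open Finset Matrix ComplexConjugate
open scoped ComplexOrder

/-!
Since `P g⁻¹ = (P g)ᴴ`, the cocycle relation turns `M^Q` into the Gram matrix
`Tr(ρ P(g)ᴴ P(g'))`, whose quadratic form at `x` is `Tr(ρ Bᴴ B)` with `B = ∑ x_g P(g)`. As the
`P(g)` span `M_d(ℂ)`, every `B` arises, and testing on rank-one `B` shows that `M^Q ⪰ 0` is
exactly `ρ ⪰ 0`. The classical half is Bochner's theorem for `G`: `μ_ρ` is, up to `1/|G|`, the
Fourier transform of `φ_ρ`; Fourier inversion writes `M^C` as a combination of the rank-one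
matrices `χ χᴴ` with coefficients proportional to `μ_ρ(χ)`, while evaluating the quadratic form of `M^C` at a
character `χ` recovers `|G|² μ_ρ(χ)`.
-/

namespace Matrix

variable {ι n R : Type*} [Fintype n] [CommRing R] [StarRing R]

def traceGram (ρ : Matrix n n R) (A : ι → Matrix n n R) : Matrix ι ι R :=
  of fun i j => (ρ * ((A i)ᴴ * A j)).trace

theorem IsHermitian.traceGram {ρ : Matrix n n R} (hρ : ρ.IsHermitian) (A : ι → Matrix n n R) :
    (traceGram ρ A).IsHermitian := by
  ext i j
  rw [conjTranspose_apply, Matrix.traceGram, of_apply, of_apply, ← trace_conjTranspose,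
    conjTranspose_mul, conjTranspose_mul, conjTranspose_conjTranspose, hρ.eq, trace_mul_comm]

variable [Fintype ι]

theorem dotProduct_mulVec_traceGram (ρ : Matrix n n R) (A : ι → Matrix n n R) (x : ι → R) :
    star x ⬝ᵥ (traceGram ρ A *ᵥ x) = (ρ * ((∑ i, x i • A i)ᴴ * ∑ i, x i • A i)).trace := by
  simp only [dotProduct, mulVec, Matrix.traceGram, of_apply, conjTranspose_sum,
    conjTranspose_smul, sum_mul, mul_sum, Matrix.smul_mul, Matrix.mul_smul, trace_sum, trace_smul,
    Pi.star_apply, smul_eq_mul]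
  rw [sum_comm]
  exact sum_congr rfl fun i _ => sum_congr rfl fun j _ => by ring

variable [PartialOrder R] [StarOrderedRing R] [DecidableEq n]

theorem IsHermitian.posSemidef_iff_forall_trace_mul_conjTranspose_mul_self_nonneg
    {ρ : Matrix n n R} (hρ : ρ.IsHermitian) :
    ρ.PosSemidef ↔ ∀ B : Matrix n n R, 0 ≤ (ρ * (Bᴴ * B)).trace := by
  refine ⟨fun hpsd B => ?_, fun h => .of_dotProduct_mulVec_nonneg hρ fun v => ?_⟩
  · rw [← mul_assoc, trace_mul_comm, ← mul_assoc]
    exact (hpsd.mul_mul_conjTranspose_same B).trace_nonneg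
  · cases isEmpty_or_nonempty n with
    | inl => simp [dotProduct]
    | inr hn =>
      obtain ⟨j⟩ := hn
      have hB : (vecMulVec (Pi.single j 1) (star v))ᴴ * vecMulVec (Pi.single j 1) (star v) =
          vecMulVec v (star v) := by
        simp [conjTranspose_vecMulVec, vecMulVec_mul_vecMulVec]
      have := h (vecMulVec (Pi.single j 1) (star v))
      rwa [hB, mul_vecMulVec, trace_vecMulVec, dotProduct_comm] at this

theorem posSemidef_traceGram_iff {ρ : Matrix n n R} (hρ : ρ.IsHermitian) {A : ι → Matrix n n R}
    (hA : Submodule.span R (Set.range A) = ⊤) : (traceGram ρ A).PosSemidef ↔ ρ.PosSemidef := by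
  rw [hρ.posSemidef_iff_forall_trace_mul_conjTranspose_mul_self_nonneg,
    posSemidef_iff_dotProduct_mulVec]
  simp only [hρ.traceGram, true_and, dotProduct_mulVec_traceGram]
  refine ⟨fun h B => ?_, fun h x => h _⟩
  have hB : B ∈ Submodule.span R (Set.range A) := hA ▸ Submodule.mem_top
  obtain ⟨x, rfl⟩ := (Submodule.mem_span_range_iff_exists_fun R).mp hB
  exact h x

end Matrix

theorem Complex.mul_nonneg_iff_of_pos_left {c z : ℂ} (hc : 0 < c) : 0 ≤ c * z ↔ 0 ≤ z := by
  simpa using mul_le_mul_iff_right₀ (b := 0) (c := z) hc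

namespace MonoidHom

variable {G : Type*} [CommGroup G]

theorem conj_coe_apply [Finite G] (χ : G →* ℂˣ) (g : G) : conj (χ g : ℂ) = χ g⁻¹ := by
  have hpow : (χ g : ℂ) ^ Nat.card G = 1 := by
    rw [← Units.val_pow_eq_pow_val, ← map_pow, pow_card_eq_one', map_one, Units.val_one]
  rw [map_inv, Units.val_inv_eq_inv_val,
    Complex.inv_eq_conj (Complex.norm_eq_one_of_pow_eq_one hpow Nat.card_pos.ne')]

variable [Fintype G] [Fintype (G →* ℂˣ)]

theorem sum_coe_apply_eq_zero {k : G} (hk : k ≠ 1) : ∑ χ : G →* ℂˣ, (χ k : ℂ) = 0 := by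
  have : NeZero (Monoid.exponent G : ℂ) := ⟨Nat.cast_ne_zero.mpr Monoid.exponent_ne_zero_of_finite⟩
  obtain ⟨ψ, hψ⟩ := CommGroup.exists_apply_ne_one_of_hasEnoughRootsOfUnity G ℂ hk
  have hmul : (ψ k : ℂ) * ∑ χ : G →* ℂˣ, (χ k : ℂ) = ∑ χ : G →* ℂˣ, (χ k : ℂ) := by
    rw [mul_sum]
    exact Fintype.sum_equiv (Equiv.mulLeft ψ) _ _ fun χ => by simp
  exact eq_zero_of_mul_eq_self_left (fun h => hψ (Units.ext h)) hmul

theorem sum_coe_apply [DecidableEq G] (k : G) :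
    ∑ χ : G →* ℂˣ, (χ k : ℂ) = if k = 1 then (Fintype.card (G →* ℂˣ) : ℂ) else 0 := by
  split_ifs with hk
  · simp [hk]
  · exact sum_coe_apply_eq_zero hk

end MonoidHom

section Bochner

open MonoidHom

variable {G : Type*} [CommGroup G] [Fintype G]

def charTransform (φ : G → ℂ) (χ : G →* ℂˣ) : ℂ :=
  ∑ g, (χ g : ℂ) * φ g

def translationKernel (φ : G → ℂ) : Matrix G G ℂ :=
  of fun g g' => φ (g' * g⁻¹)

theorem sum_charTransform_mul_coe_apply_inv [Fintype (G →* ℂˣ)] (φ : G → ℂ) (h : G) :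
    ∑ χ : G →* ℂˣ, charTransform φ χ * χ h⁻¹ = Fintype.card (G →* ℂˣ) * φ h := by
  classical
  calc ∑ χ : G →* ℂˣ, charTransform φ χ * χ h⁻¹
      = ∑ g, φ g * ∑ χ : G →* ℂˣ, (χ (g * h⁻¹) : ℂ) := by
        simp only [charTransform, sum_mul, mul_sum]
        rw [sum_comm]
        exact sum_congr rfl fun g _ => sum_congr rfl fun χ _ => by
          rw [map_mul, Units.val_mul]; ring
    _ = Fintype.card (G →* ℂˣ) * φ h := by
        simp only [sum_coe_apply, mul_inv_eq_one, mul_ite, mul_zero, sum_ite_eq', mem_univ,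
          if_true, mul_comm]

theorem dotProduct_translationKernel_mulVec_coe (φ : G → ℂ) (χ : G →* ℂˣ) :
    star (fun g => (χ g : ℂ)) ⬝ᵥ (translationKernel φ *ᵥ fun g => (χ g : ℂ)) =
      Fintype.card G * charTransform φ χ := by
  have hshift : ∀ g, (χ g⁻¹ : ℂ) * ∑ g', φ (g' * g⁻¹) * χ g' = charTransform φ χ := fun g => by
    rw [mul_sum]
    refine Fintype.sum_equiv (Equiv.mulRight g⁻¹) _ _ fun g' => ?_
    rw [Equiv.coe_mulRight, map_mul, Units.val_mul]
    ring
  simp only [dotProduct, mulVec, translationKernel, of_apply, Pi.star_apply, RCLike.star_def,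
    conj_coe_apply, hshift, sum_const, card_univ, nsmul_eq_mul]

theorem translationKernel_eq_sum_smul_vecMulVec [Fintype (G →* ℂˣ)] (φ : G → ℂ) :
    translationKernel φ = ∑ χ : G →* ℂˣ,
      ((Fintype.card (G →* ℂˣ) : ℂ)⁻¹ * charTransform φ χ) •
        vecMulVec (fun g => (χ g : ℂ)) (star fun g => (χ g : ℂ)) := by
  ext g g'
  have hχ : ∀ χ : G →* ℂˣ, (χ g : ℂ) * conj (χ g' : ℂ) = χ (g' * g⁻¹)⁻¹ := fun χ => by
    rw [conj_coe_apply, _root_.mul_inv_rev, inv_inv, map_mul, Units.val_mul]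
  simp only [translationKernel, of_apply, Matrix.sum_apply, Matrix.smul_apply, vecMulVec_apply,
    Pi.star_apply, RCLike.star_def, smul_eq_mul, mul_assoc, hχ, ← mul_sum,
    sum_charTransform_mul_coe_apply_inv]
  rw [inv_mul_cancel_left₀ (Nat.cast_ne_zero.mpr Fintype.card_ne_zero)]

theorem posSemidef_translationKernel_iff [Fintype (G →* ℂˣ)] (φ : G → ℂ) :
    (translationKernel φ).PosSemidef ↔ ∀ χ : G →* ℂˣ, 0 ≤ charTransform φ χ := by
  refine ⟨fun hpsd χ => ?_, fun hpos => ?_⟩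
  · have := hpsd.dotProduct_mulVec_nonneg fun g => (χ g : ℂ)
    rwa [dotProduct_translationKernel_mulVec_coe,
      Complex.mul_nonneg_iff_of_pos_left (Nat.cast_pos'.mpr Fintype.card_pos)] at this
  · have hcard : (0 : ℂ) ≤ (Fintype.card (G →* ℂˣ) : ℂ)⁻¹ :=
      (RCLike.inv_pos.mpr (Nat.cast_pos'.mpr Fintype.card_pos)).le
    rw [translationKernel_eq_sum_smul_vecMulVec]
    exact posSemidef_sum _ fun χ _ =>
      (posSemidef_vecMulVec_self_star _).smul (mul_nonneg hcard (hpos χ))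

end Bochner

theorem bochner_representation_general {G : Type*} [CommGroup G] [Fintype G]
    [Fintype (G →* ℂˣ)] {d : ℕ}
    (P : G → Matrix (Fin d) (Fin d) ℂ) (α : G → G → ℂ)
    (hunit : ∀ g, (P g)ᴴ * P g = 1)
    (hcoc : ∀ g g', P g * P g' = α g g' • P (g * g'))
    (hinv : ∀ g, P g⁻¹ * P g = 1)
    (hspan : Submodule.span ℂ (Set.range P) = ⊤)
    (ρ : Matrix (Fin d) (Fin d) ℂ) (hρ : ρ.IsHermitian)
    (φ : G → ℂ) (hφ : ∀ g, φ g = (ρ * P g).trace)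
    (F : (G →* ℂˣ) → Matrix (Fin d) (Fin d) ℂ)
    (hF : ∀ χ : G →* ℂˣ, F χ = (1 / (Fintype.card G : ℂ)) • ∑ g, (χ g : ℂ) • P g)
    (μ : (G →* ℂˣ) → ℂ) (hμ : ∀ χ, μ χ = (ρ * F χ).trace) :
    (ρ.PosSemidef ∧ ∀ χ, 0 ≤ μ χ) ↔
      ((Matrix.of fun g g' : G => φ (g' * g⁻¹) * α g⁻¹ g').PosSemidef ∧
        (Matrix.of fun g g' : G => φ (g' * g⁻¹)).PosSemidef) := by
  have hadj : ∀ g, (P g)ᴴ = P g⁻¹ := fun g => by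
    rw [← inv_eq_left_inv (hunit g), inv_eq_left_inv (hinv g)]
  have hMQ : (of fun g g' : G => φ (g' * g⁻¹) * α g⁻¹ g') = traceGram ρ P := by
    ext g g'
    rw [traceGram, of_apply, of_apply, hadj, hcoc, Matrix.mul_smul, trace_smul, smul_eq_mul,
      mul_comm g⁻¹, hφ, mul_comm]
  have hμφ : ∀ χ, μ χ = (Fintype.card G : ℂ)⁻¹ * charTransform φ χ := fun χ => by
    simp only [hμ, hF, charTransform, hφ, one_div, Matrix.mul_smul, Matrix.mul_sum, trace_smul,
      trace_sum, smul_eq_mul]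
  have hcard : (0 : ℂ) < (Fintype.card G : ℂ)⁻¹ :=
    RCLike.inv_pos.mpr (Nat.cast_pos'.mpr Fintype.card_pos)
  rw [hMQ, posSemidef_traceGram_iff hρ hspan]
  refine and_congr_right' <|
    (forall_congr' fun χ => ?_).trans (posSemidef_translationKernel_iff φ).symm
  rw [hμφ, Complex.mul_nonneg_iff_of_pos_left hcard]

/-- **Quantum Bochner's theorem for projective frames.**
Let `P : G → M_d(ℂ)` be a projective frame over a finite abelian group `G` with 2-cocycle `α`,
`F(χ) = (1/|G|) ∑_g χ(g) P(g)` its Fourier frame over the dual group `Ĝ = G →* ℂˣ`, and `ρ`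
Hermitian with characteristic function `φ_ρ(g) = Tr(ρ P(g))` normalized by `φ_ρ(e) = 1`.
Then `ρ` is a density matrix whose quasi-probability representation `μ_ρ(χ) = Tr(ρ F(χ))` is
nonnegative iff both `M^Q_{g,g'} = φ_ρ(g' g⁻¹) α(g⁻¹, g')` and `M^C_{g,g'} = φ_ρ(g' g⁻¹)` are
positive semidefinite. -/
theorem bochner_representation {G : Type*} [CommGroup G] [Fintype G]
    [Fintype (G →* ℂˣ)] {d : ℕ}
    (P : G → Matrix (Fin d) (Fin d) ℂ) (α : G → G → ℂ)
    (hunit : ∀ g, (P g)ᴴ * P g = 1)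
    (hone : P 1 = 1)
    (hcoc : ∀ g g', P g * P g' = α g g' • P (g * g'))
    (hinv : ∀ g, P g⁻¹ * P g = 1)
    (hspan : Submodule.span ℂ (Set.range P) = ⊤)
    (ρ : Matrix (Fin d) (Fin d) ℂ) (hρ : ρ.IsHermitian)
    (φ : G → ℂ) (hφ : ∀ g, φ g = (ρ * P g).trace)
    (hnorm : φ 1 = 1)
    (F : (G →* ℂˣ) → Matrix (Fin d) (Fin d) ℂ)
    (hF : ∀ χ : G →* ℂˣ, F χ = (1 / (Fintype.card G : ℂ)) • ∑ g, (χ g : ℂ) • P g)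
    (μ : (G →* ℂˣ) → ℂ) (hμ : ∀ χ, μ χ = (ρ * F χ).trace) :
    (ρ.PosSemidef ∧ ∀ χ, 0 ≤ μ χ) ↔
      ((Matrix.of fun g g' : G => φ (g' * g⁻¹) * α g⁻¹ g').PosSemidef ∧
        (Matrix.of fun g g' : G => φ (g' * g⁻¹)).PosSemidef) :=
  bochner_representation_general P α hunit hcoc hinv hspan ρ hρ φ hφ F hF μ hμ
end

section
/- Let G be a finite abelian group. There exist d ≥ 1 and a projective unitary representation Π : G → M_d(ℂ) that is both faithful (Π(g) is a scalar multiple of the identity only when g = e) and irreducible (the only matrices commuting with Π(g) for every g ∈ G are the scalar multiples of the identity) if and only if G is isomorphic to H × H for some finite abelian group H; moreover, in that case one may take d = |H|, so that |G| = d². -/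
/-!
The commutator scalars `P g P h = β(g, h) P h P g` of a projective representation form an
alternating bicharacter `β` on `G`; irreducibility (Schur) together with faithfulness makes it
nondegenerate. Conversely a nondegenerate alternating bicharacter splits `G` symplectically:
if `g₀` has maximal order `n` and `β(g₀, h₀)` is a primitive `n`-th root of unity, then
`G ≅ ⟨g₀⟩ × ⟨h₀⟩ × K` with `K` the joint annihilator, `⟨g₀⟩ ≅ ⟨h₀⟩`, and induction on `K` gives
`G ≅ H × H`. For `G ≅ H × Ĥ` (and `Ĥ ≅ H`) the clock-and-shift (Weyl–Heisenberg) operators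
on `ℂ^H` are a faithful irreducible projective representation of dimension `|H|`.
-/

namespace MonoidHom

open Subgroup

section CommGroup

variable {G M : Type*} [CommGroup G] [CommGroup M]

theorem apply_swap_eq_inv (β : G →* G →* M) (halt : ∀ g, β g g = 1) (g h : G) :
    β h g = (β g h)⁻¹ := by
  have := halt (g * h)
  simp only [map_mul, mul_apply, halt, one_mul, mul_one] at this
  exact eq_inv_of_mul_eq_one_left this

variable {β : G →* G →* M} {g₀ h₀ : G}

theorem orderOf_left_eq_exponent (hζ : IsPrimitiveRoot (β g₀ h₀) (Monoid.exponent G)) :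
    orderOf g₀ = Monoid.exponent G :=
  Nat.dvd_antisymm (Monoid.order_dvd_exponent g₀) <| hζ.dvd_of_pow_eq_one _ <| by
    rw [← pow_apply, ← map_pow, pow_orderOf_eq_one, map_one, one_apply]

theorem orderOf_right_eq_exponent (hζ : IsPrimitiveRoot (β g₀ h₀) (Monoid.exponent G)) :
    orderOf h₀ = Monoid.exponent G :=
  Nat.dvd_antisymm (Monoid.order_dvd_exponent h₀) <| hζ.dvd_of_pow_eq_one _ <| by
    rw [← map_pow, pow_orderOf_eq_one, map_one]

variable (β g₀ h₀)

def pairOrthogonal : Subgroup G := (β g₀).ker ⊓ (β.flip h₀).ker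

def pairDecomposition : (zpowers g₀ × zpowers h₀) × β.pairOrthogonal g₀ h₀ →* G :=
  ((zpowers g₀).subtype.coprod (zpowers h₀).subtype).coprod (β.pairOrthogonal g₀ h₀).subtype

variable {β g₀ h₀}

theorem mem_pairOrthogonal {k : G} : k ∈ β.pairOrthogonal g₀ h₀ ↔ β g₀ k = 1 ∧ β k h₀ = 1 :=
  Iff.rfl

theorem apply_zpow_mul_zpow_mul (halt : ∀ g, β g g = 1) {k : G}
    (hk : k ∈ β.pairOrthogonal g₀ h₀) (i j : ℤ) :
    β (g₀ ^ i * h₀ ^ j * k) h₀ = β g₀ h₀ ^ i ∧ β g₀ (g₀ ^ i * h₀ ^ j * k) = β g₀ h₀ ^ j := by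
  rw [mem_pairOrthogonal] at hk
  simp [map_zpow, halt, hk.1, hk.2]

theorem injective_pairDecomposition (halt : ∀ g, β g g = 1)
    (hζ : IsPrimitiveRoot (β g₀ h₀) (Monoid.exponent G)) :
    Function.Injective (β.pairDecomposition g₀ h₀) := by
  rw [injective_iff_map_eq_one]
  rintro ⟨⟨⟨_, i, rfl⟩, ⟨_, j, rfl⟩⟩, ⟨k, hk⟩⟩ hp
  obtain ⟨hi, hj⟩ := apply_zpow_mul_zpow_mul halt hk i j
  change g₀ ^ i * h₀ ^ j * k = 1 at hp
  rw [hp, map_one, one_apply, eq_comm, hζ.zpow_eq_one_iff_dvd] at hi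
  rw [hp, map_one, eq_comm, hζ.zpow_eq_one_iff_dvd] at hj
  have hi : g₀ ^ i = 1 := by
    rwa [← orderOf_dvd_iff_zpow_eq_one, orderOf_left_eq_exponent hζ]
  have hj : h₀ ^ j = 1 := by
    rwa [← orderOf_dvd_iff_zpow_eq_one, orderOf_right_eq_exponent hζ]
  rw [hi, hj, one_mul, one_mul] at hp
  ext <;> simp [hi, hj, hp]

theorem injective_compl₂_pairOrthogonal (halt : ∀ g, β g g = 1) (hβ : Function.Injective β)
    (hsurj : Function.Surjective (β.pairDecomposition g₀ h₀)) :
    Function.Injective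
      ((β.comp (β.pairOrthogonal g₀ h₀).subtype).compl₂ (β.pairOrthogonal g₀ h₀).subtype) := by
  rw [injective_iff_map_eq_one]
  rintro ⟨k, hk⟩ hk1
  obtain ⟨hk₀, hkh₀⟩ := mem_pairOrthogonal.mp hk
  suffices β k = 1 from Subtype.ext (hβ (this.trans (map_one β).symm))
  ext1 x
  obtain ⟨⟨⟨⟨_, i, rfl⟩, ⟨_, j, rfl⟩⟩, ⟨k', hk'⟩⟩, rfl⟩ := hsurj x
  have hkk' : β k k' = 1 := DFunLike.congr_fun hk1 ⟨k', hk'⟩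
  simp [pairDecomposition, map_zpow, apply_swap_eq_inv β halt g₀ k, hk₀, hkh₀, hkk']

end CommGroup

section Domain

variable {G R : Type*} [CommGroup G] [Finite G] [CommRing R] [IsDomain R]

theorem exists_isPrimitiveRoot_apply (β : G →* G →* Rˣ) (hβ : Function.Injective β) :
    ∃ g h, IsPrimitiveRoot (β g h) (Monoid.exponent G) := by
  obtain ⟨g, hg⟩ := Monoid.exists_orderOf_eq_exponent (Monoid.ExponentExists.of_finite (G := G))
  -- `β g` has order `orderOf g` since `β` is injective; its range is cyclic, generated by some
  -- `β g h`, and a generator has the same order as `β g` itself.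
  have : Finite (β g).range := Finite.of_surjective _ (β g).rangeRestrict_surjective
  have : IsCyclic (β g).range := isCyclic_subgroup_units _
  obtain ⟨⟨_, h, rfl⟩, hgen⟩ := IsCyclic.exists_generator (α := (β g).range)
  refine ⟨g, h, ?_⟩
  suffices orderOf (β g h) = Monoid.exponent G from this ▸ IsPrimitiveRoot.orderOf _
  refine Nat.dvd_antisymm (orderOf_dvd_of_pow_eq_one ?_) ?_
  · rw [← map_pow, Monoid.pow_exponent_eq_one, map_one]
  · rw [← hg]
    refine orderOf_dvd_of_pow_eq_one (hβ ?_)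
    ext1 x
    obtain ⟨i, hi⟩ := mem_zpowers_iff.mp (hgen ⟨β g x, x, rfl⟩)
    have hi : β g h ^ i = β g x := congrArg Subtype.val hi
    rw [map_pow, pow_apply, map_one, one_apply, ← hi, ← zpow_natCast, ← zpow_mul, mul_comm,
      zpow_mul, zpow_natCast, pow_orderOf_eq_one, one_zpow]

variable {β : G →* G →* Rˣ} {g₀ h₀ : G}

theorem surjective_pairDecomposition (halt : ∀ g, β g g = 1)
    (hζ : IsPrimitiveRoot (β g₀ h₀) (Monoid.exponent G)) :
    Function.Surjective (β.pairDecomposition g₀ h₀) := by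
  have hroot : ∀ x y, β x y ∈ zpowers (β g₀ h₀) := fun x y => by
    rw [hζ.zpowers_eq, mem_rootsOfUnity, ← map_pow, Monoid.pow_exponent_eq_one, map_one]
  intro x
  obtain ⟨i, hi⟩ := mem_zpowers_iff.mp (hroot x h₀)
  obtain ⟨j, hj⟩ := mem_zpowers_iff.mp (hroot g₀ x)
  have hk : (g₀ ^ i * h₀ ^ j)⁻¹ * x ∈ β.pairOrthogonal g₀ h₀ := by
    rw [mem_pairOrthogonal]
    simp [map_zpow, halt, ← hi, ← hj]
  exact ⟨⟨⟨⟨_, i, rfl⟩, ⟨_, j, rfl⟩⟩, ⟨_, hk⟩⟩, mul_inv_cancel_left _ x⟩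

noncomputable def pairDecompositionEquiv (halt : ∀ g, β g g = 1)
    (hζ : IsPrimitiveRoot (β g₀ h₀) (Monoid.exponent G)) :
    (zpowers g₀ × zpowers h₀) × β.pairOrthogonal g₀ h₀ ≃* G :=
  MulEquiv.ofBijective _ ⟨injective_pairDecomposition halt hζ, surjective_pairDecomposition halt hζ⟩

theorem card_pairOrthogonal_lt [Nontrivial G] (halt : ∀ g, β g g = 1)
    (hζ : IsPrimitiveRoot (β g₀ h₀) (Monoid.exponent G)) :
    Nat.card (β.pairOrthogonal g₀ h₀) < Nat.card G := by
  have hexp : 2 ≤ Monoid.exponent G := by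
    have := Monoid.exp_eq_one_iff.not.mpr (not_subsingleton G)
    have : Monoid.exponent G ≠ 0 := Monoid.exponent_ne_zero_of_finite
    omega
  rw [← Nat.card_congr (pairDecompositionEquiv halt hζ).toEquiv, Nat.card_prod, Nat.card_prod,
    Nat.card_zpowers, Nat.card_zpowers, orderOf_left_eq_exponent hζ, orderOf_right_eq_exponent hζ]
  have := Nat.card_pos (α := β.pairOrthogonal g₀ h₀)
  have := Nat.mul_le_mul_right (Nat.card (β.pairOrthogonal g₀ h₀)) (Nat.mul_le_mul hexp hexp)
  omega

end Domain

universe u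

theorem exists_mulEquiv_prod_self {R : Type*} [CommRing R] [IsDomain R] {G : Type u}
    [CommGroup G] [Finite G] (β : G →* G →* Rˣ) (hβ : Function.Injective β)
    (halt : ∀ g, β g g = 1) : ∃ (H : Type u) (_ : CommGroup H), Nonempty (G ≃* H × H) := by
  induction hcard : Nat.card G using Nat.strong_induction_on generalizing G with
  | _ n ih =>
  rcases subsingleton_or_nontrivial G with hG | hG
  · have : Unique G := uniqueOfSubsingleton 1
    exact ⟨PUnit, inferInstance, ⟨MulEquiv.ofUnique.trans MulEquiv.prodUnique.symm⟩⟩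
  obtain ⟨g₀, h₀, hζ⟩ := β.exists_isPrimitiveRoot_apply hβ
  obtain ⟨H, _, ⟨e⟩⟩ := ih _ (hcard ▸ card_pairOrthogonal_lt halt hζ) _
    (injective_compl₂_pairOrthogonal halt hβ (surjective_pairDecomposition halt hζ))
    (fun k => halt k) rfl
  have hcyc : Nat.card (zpowers h₀) = Nat.card (zpowers g₀) := by
    rw [Nat.card_zpowers, Nat.card_zpowers, orderOf_left_eq_exponent hζ,
      orderOf_right_eq_exponent hζ]
  exact ⟨zpowers g₀ × H, inferInstance, ⟨(pairDecompositionEquiv halt hζ).symm.trans <|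
    ((MulEquiv.refl _).prodCongr (mulEquivOfCyclicCardEq hcyc)).prodCongr e |>.trans <|
      MulEquiv.prodProdProdComm _ _ _ _⟩⟩

end MonoidHom

open Matrix

lemma MonoidHom.norm_apply_eq_one {H : Type*} [Group H] [Finite H] (φ : H →* ℂˣ) (x : H) :
    ‖(φ x : ℂ)‖ = 1 := by
  refine Complex.norm_eq_one_of_pow_eq_one (n := Nat.card H) ?_ Nat.card_pos.ne'
  rw [← Units.val_pow_eq_pow_val, ← map_pow, pow_card_eq_one', map_one, Units.val_one]

structure IsFaithfulIrreducibleProjRep {G ι : Type*} [MulOneClass G] [Fintype ι] [DecidableEq ι]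
    (P : G → Matrix ι ι ℂ) (α : G → G → ℂ) : Prop where
  unitary : ∀ g, (P g)ᴴ * P g = 1
  map_one : P 1 = 1
  map_mul : ∀ g g', P g * P g' = α g g' • P (g * g')
  faithful : ∀ g, (∃ c : ℂ, P g = c • (1 : Matrix ι ι ℂ)) → g = 1
  irreducible : ∀ M : Matrix ι ι ℂ, (∀ g, M * P g = P g * M) → ∃ c : ℂ, M = c • (1 : Matrix ι ι ℂ)

theorem isFaithfulIrreducibleProjRep_iff {G ι : Type*} [MulOneClass G] [Fintype ι] [DecidableEq ι]
    {P : G → Matrix ι ι ℂ} {α : G → G → ℂ} :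
    IsFaithfulIrreducibleProjRep P α ↔
      (∀ g, (P g)ᴴ * P g = 1) ∧ P 1 = 1 ∧ (∀ g g', P g * P g' = α g g' • P (g * g')) ∧
        (∀ g, (∃ c : ℂ, P g = c • (1 : Matrix ι ι ℂ)) → g = 1) ∧
        (∀ M : Matrix ι ι ℂ, (∀ g, M * P g = P g * M) → ∃ c : ℂ, M = c • (1 : Matrix ι ι ℂ)) :=
  ⟨fun h => ⟨h.1, h.2, h.3, h.4, h.5⟩, fun ⟨h₁, h₂, h₃, h₄, h₅⟩ => ⟨h₁, h₂, h₃, h₄, h₅⟩⟩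

namespace Weyl

variable {H : Type*} [CommGroup H] [DecidableEq H]

def shift (a : H) : Matrix H H ℂ := Matrix.of fun x y => if x = a * y then 1 else 0

def clock (φ : H →* ℂˣ) : Matrix H H ℂ := diagonal fun y => (φ y : ℂ)

lemma shift_one : shift (1 : H) = 1 := by
  ext x y
  simp [shift, one_apply]

lemma conjTranspose_shift (a : H) : (shift a)ᴴ = shift a⁻¹ := by
  ext x y
  simp [shift, eq_inv_mul_iff_mul_eq, eq_comm]

lemma clock_one : clock (1 : H →* ℂˣ) = 1 := by
  simp [clock]

variable [Fintype H]

lemma shift_mul_apply (a : H) (M : Matrix H H ℂ) (x y : H) :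
    (shift a * M) x y = M (a⁻¹ * x) y := by
  simp [shift, Matrix.mul_apply, ← inv_mul_eq_iff_eq_mul]

lemma mul_shift_apply (M : Matrix H H ℂ) (a x y : H) : (M * shift a) x y = M x (a * y) := by
  simp [shift, Matrix.mul_apply]

lemma shift_mul_shift (a b : H) : shift a * shift b = shift (a * b) := by
  ext x y
  rw [shift_mul_apply]
  simp [shift, inv_mul_eq_iff_eq_mul, mul_assoc]

lemma conjTranspose_clock (φ : H →* ℂˣ) : (clock φ)ᴴ = clock φ⁻¹ := by
  simp [clock, diagonal_conjTranspose, ← Complex.inv_eq_conj (φ.norm_apply_eq_one _)]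

lemma clock_mul_clock (φ ψ : H →* ℂˣ) : clock φ * clock ψ = clock (φ * ψ) := by
  simp [clock]

lemma clock_mul_shift (φ : H →* ℂˣ) (b : H) :
    clock φ * shift b = (φ b : ℂ) • (shift b * clock φ) := by
  ext x y
  rw [Matrix.smul_apply, shift_mul_apply]
  by_cases h : x = b * y <;> simp [clock, shift, h, inv_mul_eq_iff_eq_mul]

def weyl (g : H × (H →* ℂˣ)) : Matrix H H ℂ := shift g.1 * clock g.2

lemma weyl_mk_one (a : H) : weyl (a, 1) = shift a := by
  rw [weyl, clock_one, Matrix.mul_one]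

lemma weyl_one_mk (φ : H →* ℂˣ) : weyl (1, φ) = clock φ := by
  rw [weyl, shift_one, Matrix.one_mul]

lemma weyl_one : weyl (1 : H × (H →* ℂˣ)) = 1 := by
  rw [Prod.one_eq_mk, weyl_one_mk, clock_one]

lemma conjTranspose_weyl_mul_weyl (g : H × (H →* ℂˣ)) : (weyl g)ᴴ * weyl g = 1 := by
  rw [weyl, conjTranspose_mul, conjTranspose_shift, conjTranspose_clock, Matrix.mul_assoc,
    ← Matrix.mul_assoc (shift _), shift_mul_shift, inv_mul_cancel, shift_one, Matrix.one_mul,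
    clock_mul_clock]
  exact (congrArg clock (inv_mul_cancel g.2)).trans clock_one

lemma weyl_mul_weyl (g g' : H × (H →* ℂˣ)) :
    weyl g * weyl g' = (g.2 g'.1 : ℂ) • weyl (g * g') := by
  rw [weyl, weyl, weyl, Prod.fst_mul, Prod.snd_mul, ← shift_mul_shift, ← clock_mul_clock,
    Matrix.mul_assoc, ← Matrix.mul_assoc (clock _), clock_mul_shift]
  simp only [Matrix.smul_mul, Matrix.mul_smul, Matrix.mul_assoc]

lemma eq_one_of_weyl_eq_smul_one {g : H × (H →* ℂˣ)} {c : ℂ} (hg : weyl g = c • 1) :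
    g = 1 := by
  obtain ⟨a, φ⟩ := g
  have hentry : ∀ x y, (if x = a * y then (φ y : ℂ) else 0) = (c • (1 : Matrix H H ℂ)) x y := by
    intro x y
    rw [← hg, weyl, shift_mul_apply]
    by_cases h : x = a * y <;> simp [clock, h, inv_mul_eq_iff_eq_mul]
  have ha : a = 1 := by
    by_contra ha
    simpa [one_apply, ha] using hentry a 1
  subst ha
  have hc : c = 1 := by simpa [one_apply] using (hentry 1 1).symm
  subst hc
  refine Prod.ext rfl (MonoidHom.ext fun y => Units.ext ?_)
  simpa [one_apply] using hentry y y

lemma eq_smul_one_of_commute_weyl {M : Matrix H H ℂ} (hM : ∀ g, M * weyl g = weyl g * M) :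
    ∃ c : ℂ, M = c • 1 := by
  have hdiag : ∀ x y, x ≠ y → M x y = 0 := by
    intro x y hxy
    obtain ⟨φ, hφ⟩ : ∃ φ : H →* ℂˣ, φ x ≠ φ y := by
      by_contra! h
      exact hxy ((CommGroup.forall_apply_eq_apply_iff H).mp h)
    have h := congrFun (congrFun (hM (1, φ)) x) y
    rw [weyl_one_mk, clock, mul_diagonal, diagonal_mul] at h
    by_contra hne
    exact hφ (Units.val_injective (mul_left_cancel₀ hne (by rw [h, mul_comm])))
  have hconst : ∀ x, M x x = M 1 1 := by
    intro x
    have h := congrFun (congrFun (hM (x, 1)) x) 1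
    rwa [weyl_mk_one, mul_shift_apply, shift_mul_apply, mul_one, inv_mul_cancel] at h
  refine ⟨M 1 1, ext fun x y => ?_⟩
  by_cases h : x = y
  · simp [h, hconst]
  · simp [h, hdiag x y h, one_apply]

theorem isFaithfulIrreducibleProjRep_weyl :
    IsFaithfulIrreducibleProjRep (weyl (H := H)) fun g g' => (g.2 g'.1 : ℂ) where
  unitary := conjTranspose_weyl_mul_weyl
  map_one := weyl_one
  map_mul := weyl_mul_weyl
  faithful _ := fun ⟨_, hc⟩ => eq_one_of_weyl_eq_smul_one hc
  irreducible _ := eq_smul_one_of_commute_weyl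

end Weyl

namespace IsFaithfulIrreducibleProjRep

variable {G ι : Type*} [MulOneClass G] [Fintype ι] [DecidableEq ι] {P : G → Matrix ι ι ℂ}
  {α : G → G → ℂ}

theorem comp_mulEquiv {G' : Type*} [MulOneClass G'] (hP : IsFaithfulIrreducibleProjRep P α)
    (e : G' ≃* G) : IsFaithfulIrreducibleProjRep (P ∘ e) fun g g' => α (e g) (e g') where
  unitary g := hP.unitary (e g)
  map_one := by rw [Function.comp_apply, _root_.map_one, hP.map_one]
  map_mul g g' := by simp only [Function.comp_apply, hP.map_mul, _root_.map_mul]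
  faithful g hg := e.map_eq_one_iff.mp (hP.faithful (e g) hg)
  irreducible M hM := hP.irreducible M fun g => by simpa using hM (e.symm g)

theorem reindex {κ : Type*} [Fintype κ] [DecidableEq κ] (hP : IsFaithfulIrreducibleProjRep P α)
    (σ : ι ≃ κ) : IsFaithfulIrreducibleProjRep (fun g => reindexAlgEquiv ℂ ℂ σ (P g)) α where
  unitary g := by
    rw [coe_reindexAlgEquiv, conjTranspose_reindex, ← coe_reindexAlgEquiv ℂ ℂ, ← _root_.map_mul,
      hP.unitary, _root_.map_one]
  map_one := by rw [hP.map_one, _root_.map_one]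
  map_mul g g' := by rw [← _root_.map_mul, hP.map_mul, map_smul]
  faithful g := fun ⟨c, hc⟩ => hP.faithful g
    ⟨c, (reindexAlgEquiv ℂ ℂ σ).injective (by rw [hc, map_smul, _root_.map_one])⟩
  irreducible M hM := by
    obtain ⟨c, hc⟩ := hP.irreducible ((reindexAlgEquiv ℂ ℂ σ).symm M) fun g =>
      (reindexAlgEquiv ℂ ℂ σ).injective
        (by simpa only [_root_.map_mul, AlgEquiv.apply_symm_apply] using hM g)
    exact ⟨c, by rw [← (reindexAlgEquiv ℂ ℂ σ).apply_symm_apply M, hc, map_smul, _root_.map_one]⟩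

end IsFaithfulIrreducibleProjRep

theorem exists_isFaithfulIrreducibleProjRep_of_mulEquiv_prod {G H : Type*} [CommGroup G]
    [CommGroup H] [Fintype H] (e : G ≃* H × H) :
    ∃ (P : G → Matrix (Fin (Fintype.card H)) (Fin (Fintype.card H)) ℂ) (α : G → G → ℂ),
      IsFaithfulIrreducibleProjRep P α := by
  classical
  obtain ⟨Ψ⟩ := CommGroup.monoidHom_mulEquiv_of_hasEnoughRootsOfUnity H ℂ
  let e' : G ≃* H × (H →* ℂˣ) := e.trans (MulEquiv.prodCongr (MulEquiv.refl H) Ψ.symm)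
  exact ⟨_, _, (Weyl.isFaithfulIrreducibleProjRep_weyl.comp_mulEquiv e').reindex
    (Fintype.equivFin H)⟩

namespace IsFaithfulIrreducibleProjRep

variable {G ι : Type*} [CommGroup G] [Fintype ι] [DecidableEq ι] [Nonempty ι]
  {P : G → Matrix ι ι ℂ} {α : G → G → ℂ}

theorem apply_mul_apply_ne_zero (hP : IsFaithfulIrreducibleProjRep P α) (g h : G) :
    P g * P h ≠ 0 := by
  have hU : P g * P h ∈ unitaryGroup ι ℂ :=
    mul_mem (mem_unitaryGroup_iff'.mpr (hP.unitary g)) (mem_unitaryGroup_iff'.mpr (hP.unitary h))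
  exact (Unitary.isUnit_coe (U := ⟨_, hU⟩)).ne_zero

theorem cocycle_ne_zero (hP : IsFaithfulIrreducibleProjRep P α) (g h : G) : α g h ≠ 0 :=
  fun h0 => hP.apply_mul_apply_ne_zero g h (by rw [hP.map_mul, h0, zero_smul])

theorem mul_eq_smul_mul_swap (hP : IsFaithfulIrreducibleProjRep P α) (g h : G) :
    P g * P h = (α g h / α h g) • (P h * P g) := by
  rw [hP.map_mul, hP.map_mul, mul_comm h g, smul_smul, div_mul_cancel₀ _ (hP.cocycle_ne_zero h g)]

theorem cocycle_div_swap_mul_right (hP : IsFaithfulIrreducibleProjRep P α) (g h k : G) :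
    α g (h * k) / α (h * k) g = α g h / α h g * (α g k / α k g) := by
  have e₁ : P g * (P h * P k) = (α h k * (α g (h * k) / α (h * k) g)) • (P (h * k) * P g) := by
    rw [hP.map_mul h k, Matrix.mul_smul, hP.mul_eq_smul_mul_swap g (h * k), smul_smul]
  have e₂ : P g * (P h * P k) =
      (α g h / α h g * (α g k / α k g) * α h k) • (P (h * k) * P g) := by
    rw [← Matrix.mul_assoc, hP.mul_eq_smul_mul_swap g h, Matrix.smul_mul, Matrix.mul_assoc,
      hP.mul_eq_smul_mul_swap g k, Matrix.mul_smul, ← Matrix.mul_assoc, hP.map_mul h k,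
      Matrix.smul_mul, smul_smul, smul_smul]
  have := smul_left_injective ℂ (hP.apply_mul_apply_ne_zero (h * k) g) (e₁.symm.trans e₂)
  exact mul_left_cancel₀ (hP.cocycle_ne_zero h k) (this.trans (mul_comm _ _))

noncomputable def commutatorPairing (hP : IsFaithfulIrreducibleProjRep P α) : G →* G →* ℂˣ :=
  MonoidHom.mk'
    (fun g => MonoidHom.mk' (fun h => Units.mk0 (α g h / α h g)
      (div_ne_zero (hP.cocycle_ne_zero g h) (hP.cocycle_ne_zero h g)))
      fun h k => Units.ext (hP.cocycle_div_swap_mul_right g h k))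
    fun g g' => MonoidHom.ext fun k => Units.ext <| by
      change α (g * g') k / α k (g * g') = α g k / α k g * (α g' k / α k g')
      rw [← inv_div, hP.cocycle_div_swap_mul_right k g g', mul_inv, inv_div, inv_div]

theorem commutatorPairing_self (hP : IsFaithfulIrreducibleProjRep P α) (g : G) :
    hP.commutatorPairing g g = 1 :=
  Units.ext (div_self (hP.cocycle_ne_zero g g))

theorem injective_commutatorPairing (hP : IsFaithfulIrreducibleProjRep P α) :
    Function.Injective hP.commutatorPairing := by
  rw [injective_iff_map_eq_one]
  intro g hg
  refine hP.faithful g (hP.irreducible (P g) fun h => ?_)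
  have hgh : α g h / α h g = 1 := congrArg Units.val (DFunLike.congr_fun hg h)
  rw [hP.mul_eq_smul_mul_swap g h, hgh, one_smul]

end IsFaithfulIrreducibleProjRep

/-- **Existence of faithful irreducible projective unitary representations.**
A finite abelian group `G` admits a faithful irreducible projective unitary representation on
some `ℂ^d` (`d ≥ 1`) iff `G ≅ H × H` for some finite abelian group `H`; moreover, in that case
one may take `d = |H|` (so `|G| = d²`). -/
theorem faithful_irreducible_projRep_iff_sq (G : Type) [CommGroup G] [Fintype G] :
    ((∃ d : ℕ, 1 ≤ d ∧
        ∃ (P : G → Matrix (Fin d) (Fin d) ℂ) (α : G → G → ℂ),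
          (∀ g, (P g)ᴴ * P g = 1) ∧
          P 1 = 1 ∧
          (∀ g g', P g * P g' = α g g' • P (g * g')) ∧
          (∀ g, (∃ c : ℂ, P g = c • (1 : Matrix (Fin d) (Fin d) ℂ)) → g = 1) ∧
          (∀ M : Matrix (Fin d) (Fin d) ℂ,
            (∀ g, M * P g = P g * M) → ∃ c : ℂ, M = c • (1 : Matrix (Fin d) (Fin d) ℂ))) ↔
      (∃ (H : Type) (_ : CommGroup H) (_ : Fintype H), Nonempty (G ≃* H × H))) ∧
    (∀ (H : Type) [CommGroup H] [Fintype H], (G ≃* H × H) →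
      ∃ (P : G → Matrix (Fin (Fintype.card H)) (Fin (Fintype.card H)) ℂ)
        (α : G → G → ℂ),
          (∀ g, (P g)ᴴ * P g = 1) ∧
          P 1 = 1 ∧
          (∀ g g', P g * P g' = α g g' • P (g * g')) ∧
          (∀ g, (∃ c : ℂ, P g = c • (1 : Matrix (Fin (Fintype.card H)) (Fin (Fintype.card H)) ℂ)) → g = 1) ∧
          (∀ M : Matrix (Fin (Fintype.card H)) (Fin (Fintype.card H)) ℂ,
            (∀ g, M * P g = P g * M) →
              ∃ c : ℂ, M = c • (1 : Matrix (Fin (Fintype.card H)) (Fin (Fintype.card H)) ℂ))) := by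
  simp only [← isFaithfulIrreducibleProjRep_iff]
  refine ⟨⟨?_, fun ⟨H, _, _, ⟨e⟩⟩ => ?_⟩,
    fun H _ _ e => exists_isFaithfulIrreducibleProjRep_of_mulEquiv_prod e⟩
  · rintro ⟨d, hd, P, α, hP⟩
    have : Nonempty (Fin d) := ⟨⟨0, hd⟩⟩
    obtain ⟨H, _, ⟨e⟩⟩ := hP.commutatorPairing.exists_mulEquiv_prod_self
      hP.injective_commutatorPairing hP.commutatorPairing_self
    have : Finite (H × H) := Finite.of_equiv G e.toEquiv
    have : Finite H := Finite.prod_left H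
    exact ⟨H, _, Fintype.ofFinite H, ⟨e⟩⟩
  · exact ⟨Fintype.card H, Fintype.card_pos, exists_isFaithfulIrreducibleProjRep_of_mulEquiv_prod e⟩
end

section
/- Let G be a finite abelian group with |G| = d² and d > 1, and let Π : G → M_d(ℂ) be a projective unitary representation that is faithful (Π(g) is a scalar multiple of the identity only when g = e) and irreducible (the only matrices commuting with every Π(g) are scalar multiples of the identity). Then Tr(Π(g)) = 0 for every g ≠ e. -/
/-!
If `g ≠ e`, faithfulness and irreducibility give some `h` with `Π(h)` not commuting with `Π(g)`.
Since `G` is abelian, `Π(g)Π(h)` and `Π(h)Π(g)` are both multiples of `Π(gh)`, so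
`Π(h)Π(g)Π(h)⁻¹ = c Π(g)` with `c ≠ 1`; taking traces gives `Tr Π(g) = c Tr Π(g)`.
-/

namespace Matrix

variable {n R : Type*} [Fintype n] [DecidableEq n]

theorem trace_eq_zero_of_mul_eq_smul_mul [CommRing R] [NoZeroDivisors R]
    {U V A : Matrix n n R} {c : R}
    (hVU : V * U = 1) (hc : c ≠ 1) (hUA : U * A = c • (A * U)) : A.trace = 0 := by
  have hUV : U * V = 1 := mul_eq_one_comm.mp hVU
  have htrace : A.trace = c * A.trace :=
    calc A.trace = (V * (U * A)).trace := by rw [← Matrix.mul_assoc, hVU, Matrix.one_mul]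
      _ = c * (U * V * A).trace := by
        rw [hUA, Matrix.mul_smul, trace_smul, smul_eq_mul, ← Matrix.mul_assoc, trace_mul_comm,
          Matrix.mul_assoc]
      _ = c * A.trace := by rw [hUV, Matrix.one_mul]
  have : (1 - c) * A.trace = 0 := by rw [sub_mul, one_mul, ← htrace, sub_self]
  exact (mul_eq_zero.mp this).resolve_left (sub_ne_zero.mpr hc.symm)

theorem exists_ne_one_mul_eq_smul_mul [Field R] {X X' Y M : Matrix n n R} {a b : R}
    (hX : X' * X = 1) (hXY : X * Y = a • M) (hYX : Y * X = b • M) (hne : Y * X ≠ X * Y) :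
    ∃ c ≠ (1 : R), Y * X = c • (X * Y) := by
  have ha : a ≠ 0 := by
    rintro rfl
    have hY : Y = 0 := by
      rw [← Matrix.one_mul Y, ← hX, Matrix.mul_assoc, hXY, zero_smul, Matrix.mul_zero]
    exact hne (by rw [hY, Matrix.zero_mul, Matrix.mul_zero])
  have hba : Y * X = (b / a) • (X * Y) := by rw [hYX, hXY, smul_smul, div_mul_cancel₀ _ ha]
  exact ⟨b / a, fun h ↦ hne (by rw [hba, h, one_smul]), hba⟩

end Matrix

open Matrix

theorem trace_eq_zero_of_ne_one_general {G : Type*} [CommGroup G] {d : ℕ}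
    (P : G → Matrix (Fin d) (Fin d) ℂ) (α : G → G → ℂ)
    (hunit : ∀ g, (P g)ᴴ * P g = 1)
    (hcoc : ∀ g g', P g * P g' = α g g' • P (g * g'))
    (hfaith : ∀ g, (∃ c : ℂ, P g = c • (1 : Matrix (Fin d) (Fin d) ℂ)) → g = 1)
    (hirr : ∀ M : Matrix (Fin d) (Fin d) ℂ,
      (∀ g, M * P g = P g * M) → ∃ c : ℂ, M = c • (1 : Matrix (Fin d) (Fin d) ℂ)) :
    ∀ g : G, g ≠ 1 → (P g).trace = 0 := by
  intro g hg
  obtain ⟨h, hh⟩ : ∃ h, P h * P g ≠ P g * P h := by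
    by_contra! hcomm
    exact hg (hfaith g (hirr (P g) fun h ↦ (hcomm h).symm))
  obtain ⟨c, hc, hhg⟩ := exists_ne_one_mul_eq_smul_mul (hunit g) (hcoc g h)
    (by rw [hcoc, mul_comm h g]) hh
  exact trace_eq_zero_of_mul_eq_smul_mul (hunit h) hc hhg

/-- Every faithful irreducible projective unitary representation `P : G → M_d(ℂ)` of a finite
abelian group `G` with `|G| = d²` and `d > 1` has `Tr(P(g)) = 0` for all `g ≠ e`. -/
theorem trace_eq_zero_of_ne_one {G : Type*} [CommGroup G] [Fintype G] {d : ℕ}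
    (hd : 1 < d) (hcard : Fintype.card G = d ^ 2)
    (P : G → Matrix (Fin d) (Fin d) ℂ) (α : G → G → ℂ)
    (hunit : ∀ g, (P g)ᴴ * P g = 1)
    (hone : P 1 = 1)
    (hcoc : ∀ g g', P g * P g' = α g g' • P (g * g'))
    (hfaith : ∀ g, (∃ c : ℂ, P g = c • (1 : Matrix (Fin d) (Fin d) ℂ)) → g = 1)
    (hirr : ∀ M : Matrix (Fin d) (Fin d) ℂ,
      (∀ g, M * P g = P g * M) → ∃ c : ℂ, M = c • (1 : Matrix (Fin d) (Fin d) ℂ)) :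
    ∀ g : G, g ≠ 1 → (P g).trace = 0 :=
  trace_eq_zero_of_ne_one_general P α hunit hcoc hfaith hirr
end
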